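/- Conversely, if a 3D binary array contains an all-ones k × k × k cube with deepest layer d, then the depth-frequency matrix f^{(d)} has a k × k contiguous submatrix with all entries ≥ k. -/

import Mathlib

/-- An all-ones `k × k × k` cube whose deepest layer is `d`. -/
def hasCubeAt {l m n : ℕ} (M : Fin l → Fin m → Fin n → Bool) (d : Fin l) (k : ℕ) : Prop :=
  k ≤ d.val + 1 ∧
  ∃ i₀ j₀ : ℕ, ∃ (hi : i₀ + k ≤ m) (hj : j₀ + k ≤ n),
    ∀ r, ∀ _ : r < k, ∀ s, ∀ _ : s < k, ∀ t, ∀ _ : t < k,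
      M ⟨d.val - r, Nat.lt_of_le_of_lt (Nat.sub_le _ _) d.isLt⟩
        ⟨i₀ + s, by omega⟩ ⟨j₀ + t, by omega⟩ = true

theorem stmt16 {l m n : ℕ} (M : Fin l → Fin m → Fin n → Bool)
    (f : Fin l → Fin m → Fin n → ℕ)
    (hf : ∀ (d : Fin l) (i : Fin m) (j : Fin n),
      IsGreatest {k : ℕ | k ≤ d.val + 1 ∧
        ∀ t < k, M ⟨d.val - t, Nat.lt_of_le_of_lt (Nat.sub_le _ _) d.isLt⟩ i j = true}
        (f d i j))
    (d : Fin l) (k : ℕ) (h : hasCubeAt M d k) :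
    ∃ i₀ j₀ : ℕ, ∃ (hi : i₀ + k ≤ m) (hj : j₀ + k ≤ n),
      ∀ s, ∀ _ : s < k, ∀ t, ∀ _ : t < k, k ≤ f d ⟨i₀ + s, by omega⟩ ⟨j₀ + t, by omega⟩ := by
  obtain ⟨hk, i₀, j₀, hi, hj, hcube⟩ := h
  refine ⟨i₀, j₀, hi, hj, fun s hs t ht => ?_⟩
  exact (hf d _ _).2 ⟨hk, fun r hr => hcube r hr s hs t ht⟩
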